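/- arXiv:2105.00586 — 3 statements merged into one kernel-verified Lean document; each statement's English description precedes it below -/
import Mathlib

section
/- For every α with 0 < α < 3 there exists a Markov triple (a,b,c) with c = max(a,b,c) such that α·ab/c < 1, i.e. the Markov triangle Δ_{a,b,c}(α) fits in the half-strip ℝ_{≥0} × [0,1). -/
private def mk : ℕ → ℤ
  | 0 => 1
  | 1 => 1
  | 2 => 1
  | (k+3) => 3 * mk (k+2) * mk (k+1) - mk k

private lemma mk_pos_mono : ∀ k, 1 ≤ mk k ∧ mk k ≤ mk (k+1) := by
  intro k
  induction k using Nat.strong_induction_on with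
  | _ k ih =>
    match k with
    | 0 => exact ⟨le_refl 1, le_refl 1⟩
    | 1 => exact ⟨le_refl 1, le_refl 1⟩
    | 2 =>
      refine ⟨le_refl 1, ?_⟩
      show (1:ℤ) ≤ 3 * mk 2 * mk 1 - mk 0
      norm_num [mk]
    | (k+3) =>
      obtain ⟨h1, h2⟩ := ih k (by omega)
      obtain ⟨h3, h4⟩ := ih (k+1) (by omega)
      obtain ⟨h5, h6⟩ := ih (k+2) (by omega)
      constructor
      · show (1:ℤ) ≤ 3 * mk (k+2) * mk (k+1) - mk k
        nlinarith
      · show 3 * mk (k+2) * mk (k+1) - mk k ≤ 3 * mk (k+3) * mk (k+2) - mk (k+1)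
        show 3 * mk (k+2) * mk (k+1) - mk k ≤
          3 * (3 * mk (k+2) * mk (k+1) - mk k) * mk (k+2) - mk (k+1)
        have hd : 2 * mk (k+2) ≤ 3 * mk (k+2) * mk (k+1) - mk k := by nlinarith
        nlinarith [mul_le_mul_of_nonneg_left h5 (by nlinarith : (0:ℤ) ≤ 3 * mk (k+2) * mk (k+1) - mk k)]

private lemma mk_pos (k : ℕ) : 1 ≤ mk k := (mk_pos_mono k).1

private lemma mk_mono (k : ℕ) : mk k ≤ mk (k+1) := (mk_pos_mono k).2

private lemma mk_markov : ∀ k, mk (k+2) ^ 2 + mk (k+1) ^ 2 + mk k ^ 2 =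
    3 * mk (k+2) * mk (k+1) * mk k := by
  intro k
  induction k with
  | zero => norm_num [mk]
  | succ k ih =>
    show (3 * mk (k+2) * mk (k+1) - mk k) ^ 2 + mk (k+2) ^ 2 + mk (k+1) ^ 2 =
      3 * (3 * mk (k+2) * mk (k+1) - mk k) * mk (k+2) * mk (k+1)
    nlinarith [ih]

private lemma mk_grow : ∀ n : ℕ, (n : ℤ) ≤ mk (3 * n) := by
  intro n
  induction n with
  | zero => simp [mk]
  | succ n ih =>
    have h1 := mk_pos (3*n)
    have h2 := mk_pos (3*n+1)
    have h3 := mk_pos (3*n+2)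
    have h4 := mk_mono (3*n)
    have h5 := mk_mono (3*n+1)
    have key : mk (3*n) + 1 ≤ mk (3*(n+1)) := by
      show mk (3*n) + 1 ≤ mk (3*n+3)
      show mk (3*n) + 1 ≤ 3 * mk (3*n+2) * mk (3*n+1) - mk (3*n)
      nlinarith
    push_cast
    omega

/-- For every `0 < α < 3` there is a Markov triple `(a,b,c)` with `c = max(a,b,c)` whose
Markov triangle `Δ_{a,b,c}(α)` fits in the half-strip `ℝ_{≥0} × [0,1)`, i.e.
its Euclidean height `α a b / c` over the longest edge is `< 1`. -/
theorem markov_triangle_fits_strip (α : ℝ) (hα0 : 0 < α) (hα3 : α < 3) :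
    ∃ a b c : ℤ, 0 < a ∧ 0 < b ∧ 0 < c ∧
      a ^ 2 + b ^ 2 + c ^ 2 = 3 * a * b * c ∧ a ≤ c ∧ b ≤ c ∧
      α * (a : ℝ) * b / c < 1 := by
  obtain ⟨n, hn⟩ := exists_nat_gt (1 / (3 - α))
  set N := 3 * (n + 1) with hN
  refine ⟨mk (N+1), mk N, mk (N+2), ?_, ?_, ?_, ?_, ?_, ?_, ?_⟩
  · exact lt_of_lt_of_le zero_lt_one (mk_pos _)
  · exact lt_of_lt_of_le zero_lt_one (mk_pos _)
  · exact lt_of_lt_of_le zero_lt_one (mk_pos _)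
  · have := mk_markov N; linarith
  · exact mk_mono (N+1)
  · exact (mk_mono N).trans (mk_mono (N+1))
  · -- key inequality
    have hc : (0:ℝ) < mk (N+2) := by exact_mod_cast lt_of_lt_of_le zero_lt_one (mk_pos _)
    rw [div_lt_one hc]
    -- mk (N+2) = 3 * mk (N+1) * mk N - mk (N-1), with N = 3n+3
    have hrec : mk (N+2) = 3 * mk (N+1) * mk N - mk (N-1) := by
      show mk (3*n+3+2) = 3 * mk (3*n+3+1) * mk (3*n+3) - mk (3*n+3-1)
      show mk (3*n+2+3) = _
      rfl
    have hmono : mk (N-1) ≤ mk (N+1) := by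
      have : N - 1 + 1 = N := by omega
      calc mk (N-1) ≤ mk (N-1+1) := mk_mono _
        _ = mk N := by rw [this]
        _ ≤ mk (N+1) := mk_mono _
    -- mk N ≥ n+1 > 1/(3-α)
    have hgrow : ((n:ℤ) + 1) ≤ mk N := by
      have := mk_grow (n+1); push_cast at this ⊢; linarith
    have h3α : 0 < 3 - α := by linarith
    have hnR : 1 / (3 - α) < (n:ℝ) + 1 := by linarith [hn]
    have hNR : 1 / (3 - α) < (mk N : ℝ) := by
      have : ((n:ℝ) + 1) ≤ (mk N : ℝ) := by exact_mod_cast hgrow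
      linarith
    have h1 : 1 < (3 - α) * (mk N : ℝ) := by
      rw [div_lt_iff₀ h3α] at hNR; linarith
    have ha : (1:ℝ) ≤ (mk (N+1) : ℝ) := by exact_mod_cast mk_pos _
    have hm : (mk (N-1) : ℝ) ≤ (mk (N+1) : ℝ) := by exact_mod_cast hmono
    have hb : (1:ℝ) ≤ (mk N : ℝ) := by exact_mod_cast mk_pos _
    have hrecR : (mk (N+2) : ℝ) = 3 * mk (N+1) * mk N - mk (N-1) := by
      exact_mod_cast hrec
    rw [hrecR]
    nlinarith
end

section
/- Let n, k be positive integers with k ≤ n, let Σ be a compact smooth k-dimensional submanifold (possibly with boundary) of ℝⁿ, and let t > 0. Then the t-neighborhood N_t(Σ) of Σ is contained in the union of the exponential t-tube V_t(Σ) and the t-neighborhood N_t(∂Σ) of its boundary. -/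
/-!
Take a point `F x` of `Σ` nearest to `p`; it lies within `t` of `p`. If `x` is a boundary point,
`p ∈ N_t(∂Σ)`. Otherwise `x` is an interior local minimum of `y ↦ ‖p - F y‖²`, so in a chart the
derivative of this function vanishes at `x`, i.e. `p - F x` is orthogonal to the tangent space,
and `p = F x + (p - F x)` lies in `V_t(Σ)`.
-/

open scoped Manifold RealInnerProductSpace Topology
open Metric Set

theorem inner_sub_fderiv_eq_zero_of_isLocalMin_norm_sub {E F : Type*}
    [NormedAddCommGroup E] [NormedSpace ℝ E] [NormedAddCommGroup F] [InnerProductSpace ℝ F]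
    {w : E → F} {c : E} {p : F} (hw : DifferentiableAt ℝ w c)
    (hmin : IsLocalMin (fun z ↦ ‖p - w z‖) c) (u : E) :
    ⟪p - w c, fderiv ℝ w c u⟫ = 0 := by
  have hsq : IsLocalMin (fun z ↦ ‖p - w z‖ ^ 2) c :=
    Filter.Eventually.mono hmin fun _ hz ↦ pow_le_pow_left₀ (norm_nonneg _) hz 2
  have hderiv := congr($(hsq.hasFDerivAt_eq_zero
    ((hasFDerivAt_const p c).sub hw.hasFDerivAt).norm_sq) u)
  simp only [zero_sub, smul_apply, ContinuousLinearMap.coe_comp,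
    Function.comp_apply, neg_apply, innerSL_apply_apply, inner_neg_right,
    zero_apply, smul_eq_zero, neg_eq_zero] at hderiv
  exact hderiv.resolve_left two_ne_zero

theorem inner_sub_mfderiv_eq_zero_of_isLocalMin_dist {E H M F : Type*}
    [NormedAddCommGroup E] [NormedSpace ℝ E] [TopologicalSpace H] {I : ModelWithCorners ℝ E H}
    [TopologicalSpace M] [ChartedSpace H M]
    [NormedAddCommGroup F] [InnerProductSpace ℝ F]
    {f : M → F} {x : M} {p : F} (hx : I.IsInteriorPoint x)
    (hf : MDifferentiableAt I 𝓘(ℝ, F) f x)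
    (hmin : IsLocalMin (fun y ↦ dist p (f y)) x) (u : TangentSpace I x) :
    ⟪p - f x, mfderiv I 𝓘(ℝ, F) f x u⟫ = 0 := by
  set e := extChartAt I x
  have hex : e.symm (e x) = x := e.left_inv (mem_extChartAt_source x)
  have hrange : range I ∈ 𝓝 (e x) := range_mem_nhds_isInteriorPoint hx
  have hchart : writtenInExtChartAt I 𝓘(ℝ, F) x f = f ∘ e.symm := by
    simp [writtenInExtChartAt, e, chartAt_self_eq]
  have hdiff := hf.differentiableWithinAt_writtenInExtChartAt.differentiableAt hrange
  rw [hchart] at hdiff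
  have hmin_chart : IsLocalMin ((fun y ↦ ‖p - f y‖) ∘ e.symm) (e x) := by
    rw [← hex] at hmin
    simpa only [dist_eq_norm] using hmin.comp_continuous (continuousAt_extChartAt_symm x)
  have key := inner_sub_fderiv_eq_zero_of_isLocalMin_norm_sub hdiff hmin_chart u
  rw [Function.comp_apply, hex] at key
  rwa [hf.mfderiv, fderivWithin_of_mem_nhds hrange, hchart]

theorem thickening_subset_tube_union_boundary_general {n k : ℕ} [NeZero k]
    {M : Type*} [TopologicalSpace M] [ChartedSpace (EuclideanHalfSpace k) M]
    [CompactSpace M]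
    (F : M → EuclideanSpace ℝ (Fin n))
    (hF : ContMDiff (𝓡∂ k) 𝓘(ℝ, EuclideanSpace ℝ (Fin n)) (⊤ : ℕ∞) F)
    (t : ℝ) :
    thickening t (range F) ⊆
      { p | ∃ (x : M) (v : EuclideanSpace ℝ (Fin n)), ‖v‖ < t ∧
          (∀ u ∈ range (mfderiv (𝓡∂ k) 𝓘(ℝ, EuclideanSpace ℝ (Fin n)) F x), ⟪v, u⟫ = 0) ∧
          p = F x + v } ∪
        thickening t (F '' ((𝓡∂ k).boundary M)) := by
  intro p hp
  obtain ⟨_, ⟨y, rfl⟩, hpy⟩ := mem_thickening_iff.1 hp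
  obtain ⟨x, -, hx⟩ := isCompact_univ.exists_isMinOn (f := fun y ↦ dist p (F y))
    ⟨y, mem_univ y⟩ (continuous_const.dist hF.continuous).continuousOn
  have hpx : dist p (F x) < t := (hx (mem_univ y)).trans_lt hpy
  rcases (𝓡∂ k).isInteriorPoint_or_isBoundaryPoint x with hint | hbd
  · refine .inl ⟨x, p - F x, by rwa [← dist_eq_norm], ?_, by abel⟩
    rintro _ ⟨u, rfl⟩
    exact inner_sub_mfderiv_eq_zero_of_isLocalMin_dist hint (hF.mdifferentiableAt (by simp))
      (hx.isLocalMin Filter.univ_mem) u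
  · exact .inr (mem_thickening_iff.2 ⟨F x, mem_image_of_mem F hbd, hpx⟩)

/-- For a compact smooth `k`-dimensional submanifold `Σ ⊆ ℝⁿ` (possibly with boundary),
parametrized by a smooth embedding `F` of a compact `k`-manifold with boundary `M`, the
`t`-neighborhood of `Σ` is contained in the union of the exponential `t`-tube
`V_t(Σ) = {F x + v : v ⟂ T_{F x}Σ, ‖v‖ < t}` and the `t`-neighborhood of `∂Σ`. -/
theorem thickening_subset_tube_union_boundary {n k : ℕ} [NeZero k] (hkn : k ≤ n)
    {M : Type*} [TopologicalSpace M] [ChartedSpace (EuclideanHalfSpace k) M]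
    [IsManifold (𝓡∂ k) (⊤ : ℕ∞) M] [CompactSpace M]
    (F : M → EuclideanSpace ℝ (Fin n))
    (hF : ContMDiff (𝓡∂ k) 𝓘(ℝ, EuclideanSpace ℝ (Fin n)) (⊤ : ℕ∞) F)
    (hF_emb : Topology.IsEmbedding F)
    (hF_imm : ∀ x, Function.Injective
      (mfderiv (𝓡∂ k) 𝓘(ℝ, EuclideanSpace ℝ (Fin n)) F x))
    (t : ℝ) (ht : 0 < t) :
    thickening t (range F) ⊆
      { p | ∃ (x : M) (v : EuclideanSpace ℝ (Fin n)), ‖v‖ < t ∧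
          (∀ u ∈ range (mfderiv (𝓡∂ k) 𝓘(ℝ, EuclideanSpace ℝ (Fin n)) F x), ⟪v, u⟫ = 0) ∧
          p = F x + v } ∪
        thickening t (F '' ((𝓡∂ k).boundary M)) :=
  thickening_subset_tube_union_boundary_general F hF t
end

section
/- Two 2-dimensional real linear subspaces V, W of ℂ² (with its standard Hermitian/Kähler structure) have the same symplecticity if and only if there is a unitary transformation U ∈ U(2) with U(V) = W, where the symplecticity of V is |ω(e₁,e₂)| for any orthonormal basis (e₁,e₂) of V and ω the standard symplectic form. -/
/-!
Write `ω = Im ⟪·, ·⟫`. On the real span of a real-orthonormal pair `(f₁, f₂)`, `ω` is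
`ω(f₁, f₂)` times the area form, so passing to another real-orthonormal pair of the same plane
multiplies it by the determinant of an orthogonal `2 × 2` matrix, i.e. by `±1`; since unitaries
preserve `⟪·, ·⟫`, symplecticity is a unitary invariant. Conversely, if
`|ω(e₁, e₂)| = |ω(f₁, f₂)|` then, after possibly swapping `e₁` and `e₂`, the two pairs have the
same complex Gram matrix, and families with equal Gram matrices are related by a unitary:
`∑ cᵢ vᵢ ↦ ∑ cᵢ wᵢ` is a well-defined isometry between their spans, which extends to the whole
space.
-/

open scoped InnerProductSpace

section Gram

variable {𝕜 E ι : Type*} [RCLike 𝕜] [NormedAddCommGroup E] [InnerProductSpace 𝕜 E] [Fintype ι]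
  {v w : ι → E}

theorem inner_linearCombination_eq_of_gram_eq (h : ∀ i j, ⟪v i, v j⟫_𝕜 = ⟪w i, w j⟫_𝕜)
    (c d : ι → 𝕜) :
    ⟪Fintype.linearCombination 𝕜 v c, Fintype.linearCombination 𝕜 v d⟫_𝕜 =
      ⟪Fintype.linearCombination 𝕜 w c, Fintype.linearCombination 𝕜 w d⟫_𝕜 := by
  simp [Fintype.linearCombination_apply, sum_inner, inner_sum, inner_smul_left,
    inner_smul_right, h]

theorem norm_linearCombination_eq_of_gram_eq (h : ∀ i j, ⟪v i, v j⟫_𝕜 = ⟪w i, w j⟫_𝕜)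
    (c : ι → 𝕜) :
    ‖Fintype.linearCombination 𝕜 v c‖ = ‖Fintype.linearCombination 𝕜 w c‖ := by
  rw [norm_eq_sqrt_re_inner (𝕜 := 𝕜), norm_eq_sqrt_re_inner (𝕜 := 𝕜),
    inner_linearCombination_eq_of_gram_eq h]

theorem exists_linearIsometryEquiv_apply_eq_of_gram_eq [FiniteDimensional 𝕜 E]
    (h : ∀ i j, ⟪v i, v j⟫_𝕜 = ⟪w i, w j⟫_𝕜) :
    ∃ U : E ≃ₗᵢ[𝕜] E, ∀ i, U (v i) = w i := by
  classical
  set A := Fintype.linearCombination 𝕜 v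
  set B := Fintype.linearCombination 𝕜 w
  have hker : LinearMap.ker A ≤ LinearMap.ker B := fun c hc => by
    rw [LinearMap.mem_ker, ← norm_eq_zero] at hc ⊢
    rwa [← norm_linearCombination_eq_of_gram_eq h]
  let L : LinearMap.range A →ₗ[𝕜] E := (LinearMap.ker A).liftQ B hker ∘ₗ A.quotKerEquivRange.symm
  have hL (c : ι → 𝕜) : L ⟨A c, LinearMap.mem_range_self A c⟩ = B c := by
    simp [L, LinearMap.quotKerEquivRange_symm_apply_image]
  let L' : LinearMap.range A →ₗᵢ[𝕜] E :=
    ⟨L, by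
      rintro ⟨_, c, rfl⟩
      rw [hL, Submodule.coe_norm, norm_linearCombination_eq_of_gram_eq h]⟩
  refine ⟨L'.extend.toLinearIsometryEquiv rfl, fun i => ?_⟩
  have hv : v i = A (Pi.single i 1) := by simp [A]
  have hw : w i = B (Pi.single i 1) := by simp [B]
  rw [LinearIsometry.toLinearIsometryEquiv_apply, hv, hw]
  exact (L'.extend_apply ⟨_, LinearMap.mem_range_self A _⟩).trans (hL _)

end Gram

section Symplecticity

variable {E : Type*} [NormedAddCommGroup E] [InnerProductSpace ℂ E]

theorem inner_real_smul_add_real_smul (f₁ f₂ : E) (α β γ δ : ℝ) :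
    ⟪α • f₁ + β • f₂, γ • f₁ + δ • f₂⟫_ℂ =
      ((α * γ : ℝ) : ℂ) * ⟪f₁, f₁⟫_ℂ + ((α * δ : ℝ) : ℂ) * ⟪f₁, f₂⟫_ℂ
        + ((β * γ : ℝ) : ℂ) * ⟪f₂, f₁⟫_ℂ + ((β * δ : ℝ) : ℂ) * ⟪f₂, f₂⟫_ℂ := by
  simp only [← Complex.coe_smul, inner_add_left, inner_add_right, inner_smul_left,
    inner_smul_right, Complex.conj_ofReal, Complex.ofReal_mul]
  ring

theorem im_inner_real_smul_add_real_smul (f₁ f₂ : E) (α β γ δ : ℝ) :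
    (⟪α • f₁ + β • f₂, γ • f₁ + δ • f₂⟫_ℂ).im = (α * δ - β * γ) * (⟪f₁, f₂⟫_ℂ).im := by
  rw [inner_real_smul_add_real_smul]
  have h₁₁ : (⟪f₁, f₁⟫_ℂ).im = 0 := inner_self_im (𝕜 := ℂ) f₁
  have h₂₂ : (⟪f₂, f₂⟫_ℂ).im = 0 := inner_self_im (𝕜 := ℂ) f₂
  have h₂₁ : (⟪f₂, f₁⟫_ℂ).im = -(⟪f₁, f₂⟫_ℂ).im := inner_im_symm (𝕜 := ℂ) f₂ f₁
  simp only [Complex.add_im, Complex.im_ofReal_mul, h₁₁, h₂₂, h₂₁]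
  ring

theorem re_inner_real_smul_add_real_smul {f₁ f₂ : E} (hf₁ : (⟪f₁, f₁⟫_ℂ).re = 1)
    (hf₂ : (⟪f₂, f₂⟫_ℂ).re = 1) (hf₁₂ : (⟪f₁, f₂⟫_ℂ).re = 0) (α β γ δ : ℝ) :
    (⟪α • f₁ + β • f₂, γ • f₁ + δ • f₂⟫_ℂ).re = α * γ + β * δ := by
  rw [inner_real_smul_add_real_smul]
  have h₂₁ : (⟪f₂, f₁⟫_ℂ).re = (⟪f₁, f₂⟫_ℂ).re := inner_re_symm (𝕜 := ℂ) f₂ f₁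
  simp only [Complex.add_re, Complex.re_ofReal_mul, h₂₁, hf₁, hf₂, hf₁₂]
  ring

theorem abs_im_inner_eq_of_mem_span_pair {f₁ f₂ a₁ a₂ : E} (hf₁ : (⟪f₁, f₁⟫_ℂ).re = 1)
    (hf₂ : (⟪f₂, f₂⟫_ℂ).re = 1) (hf₁₂ : (⟪f₁, f₂⟫_ℂ).re = 0)
    (ha₁ : a₁ ∈ Submodule.span ℝ {f₁, f₂}) (ha₂ : a₂ ∈ Submodule.span ℝ {f₁, f₂})
    (ha₁₁ : (⟪a₁, a₁⟫_ℂ).re = 1) (ha₂₂ : (⟪a₂, a₂⟫_ℂ).re = 1) (ha₁₂ : (⟪a₁, a₂⟫_ℂ).re = 0) :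
    |(⟪a₁, a₂⟫_ℂ).im| = |(⟪f₁, f₂⟫_ℂ).im| := by
  obtain ⟨α, β, rfl⟩ := Submodule.mem_span_pair.mp ha₁
  obtain ⟨γ, δ, rfl⟩ := Submodule.mem_span_pair.mp ha₂
  simp only [re_inner_real_smul_add_real_smul hf₁ hf₂ hf₁₂] at ha₁₁ ha₂₂ ha₁₂
  -- Lagrange's identity: `(αγ + βδ)² + (αδ - βγ)² = (α² + β²)(γ² + δ²)`.
  have hdet : |α * δ - β * γ| = 1 := by
    rw [← abs_one, ← sq_eq_sq_iff_abs_eq_abs]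
    linear_combination (γ * γ + δ * δ) * ha₁₁ + ha₂₂ - (α * γ + β * δ) * ha₁₂
  rw [im_inner_real_smul_add_real_smul, abs_mul, hdet, one_mul]

theorem exists_linearIsometryEquiv_map_span_pair_eq [FiniteDimensional ℂ E] {e₁ e₂ f₁ f₂ : E}
    (h₁₁ : ⟪e₁, e₁⟫_ℂ = ⟪f₁, f₁⟫_ℂ) (h₂₂ : ⟪e₂, e₂⟫_ℂ = ⟪f₂, f₂⟫_ℂ)
    (h₁₂ : ⟪e₁, e₂⟫_ℂ = ⟪f₁, f₂⟫_ℂ) :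
    ∃ U : E ≃ₗᵢ[ℂ] E, (Submodule.span ℝ {e₁, e₂}).map
      (U.toLinearEquiv.toLinearMap.restrictScalars ℝ) = Submodule.span ℝ {f₁, f₂} := by
  have h₂₁ : ⟪e₂, e₁⟫_ℂ = ⟪f₂, f₁⟫_ℂ := by rw [← inner_conj_symm, h₁₂, inner_conj_symm]
  obtain ⟨U, hU⟩ := exists_linearIsometryEquiv_apply_eq_of_gram_eq (𝕜 := ℂ) (v := ![e₁, e₂])
    (w := ![f₁, f₂]) (by
      simp only [Fin.forall_fin_two, Matrix.cons_val_zero, Matrix.cons_val_one]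
      exact ⟨⟨h₁₁, h₁₂⟩, h₂₁, h₂₂⟩)
  refine ⟨U, ?_⟩
  rw [Submodule.map_span, Set.image_pair]
  exact congrArg₂ (fun x y => Submodule.span ℝ {x, y}) (hU 0) (hU 1)

end Symplecticity

theorem symplecticity_iff_unitary_general
    (ω : EuclideanSpace ℂ (Fin 2) → EuclideanSpace ℂ (Fin 2) → ℝ)
    (hω : ∀ u v, ω u v = (inner ℂ u v : ℂ).im)
    (V W : Submodule ℝ (EuclideanSpace ℂ (Fin 2)))
    (e₁ e₂ f₁ f₂ : EuclideanSpace ℂ (Fin 2))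
    (hV : V = Submodule.span ℝ {e₁, e₂}) (hW : W = Submodule.span ℝ {f₁, f₂})
    (he₁ : (inner ℂ e₁ e₁ : ℂ).re = 1) (he₂ : (inner ℂ e₂ e₂ : ℂ).re = 1)
    (he₁₂ : (inner ℂ e₁ e₂ : ℂ).re = 0)
    (hf₁ : (inner ℂ f₁ f₁ : ℂ).re = 1) (hf₂ : (inner ℂ f₂ f₂ : ℂ).re = 1)
    (hf₁₂ : (inner ℂ f₁ f₂ : ℂ).re = 0) :
    |ω e₁ e₂| = |ω f₁ f₂| ↔
      ∃ U : EuclideanSpace ℂ (Fin 2) ≃ₗᵢ[ℂ] EuclideanSpace ℂ (Fin 2),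
        V.map (U.toLinearEquiv.toLinearMap.restrictScalars ℝ) = W := by
  have one_of_re (x : EuclideanSpace ℂ (Fin 2)) (hx : (⟪x, x⟫_ℂ).re = 1) : ⟪x, x⟫_ℂ = 1 :=
    Complex.ext hx (inner_self_im (𝕜 := ℂ) x)
  rw [hω, hω, hV, hW]
  constructor
  · intro h
    rcases abs_eq_abs.mp h with h | h
    · exact exists_linearIsometryEquiv_map_span_pair_eq (by rw [one_of_re _ he₁, one_of_re _ hf₁])
        (by rw [one_of_re _ he₂, one_of_re _ hf₂]) (Complex.ext (by rw [he₁₂, hf₁₂]) h)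
    · have h₂₁ : ⟪e₂, e₁⟫_ℂ = ⟪f₁, f₂⟫_ℂ := by
        rw [← inner_conj_symm]
        exact Complex.ext (by rw [Complex.conj_re, he₁₂, hf₁₂])
          (by rw [Complex.conj_im, h, neg_neg])
      rw [Set.pair_comm e₁]
      exact exists_linearIsometryEquiv_map_span_pair_eq (by rw [one_of_re _ he₂, one_of_re _ hf₁])
        (by rw [one_of_re _ he₁, one_of_re _ hf₂]) h₂₁
  · rintro ⟨U, hU⟩
    have hUe : ∀ x ∈ ({e₁, e₂} : Set _), U x ∈ Submodule.span ℝ {f₁, f₂} := fun x hx =>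
      hU ▸ Submodule.mem_map_of_mem (Submodule.subset_span hx)
    have h := abs_im_inner_eq_of_mem_span_pair hf₁ hf₂ hf₁₂ (hUe e₁ (by simp)) (hUe e₂ (by simp))
      (by rwa [U.inner_map_map]) (by rwa [U.inner_map_map]) (by rwa [U.inner_map_map])
    rwa [U.inner_map_map] at h

/-- Two 2-dimensional real subspaces of `ℂ²` have the same symplecticity iff some unitary
transformation maps one onto the other. Here `V = span_ℝ{e₁,e₂}` and `W = span_ℝ{f₁,f₂}`
for real-orthonormal pairs, the standard symplectic form is `ω(u,v) = Im ⟪u,v⟫`, and the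
symplecticity of `V` is `|ω(e₁,e₂)|`. -/
theorem symplecticity_iff_unitary
    (ω : EuclideanSpace ℂ (Fin 2) → EuclideanSpace ℂ (Fin 2) → ℝ)
    (hω : ∀ u v, ω u v = (inner ℂ u v : ℂ).im)
    (V W : Submodule ℝ (EuclideanSpace ℂ (Fin 2)))
    (e₁ e₂ f₁ f₂ : EuclideanSpace ℂ (Fin 2))
    (hV : V = Submodule.span ℝ {e₁, e₂}) (hW : W = Submodule.span ℝ {f₁, f₂})
    (he₁ : (inner ℂ e₁ e₁ : ℂ).re = 1) (he₂ : (inner ℂ e₂ e₂ : ℂ).re = 1)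
    (he₁₂ : (inner ℂ e₁ e₂ : ℂ).re = 0)
    (hf₁ : (inner ℂ f₁ f₁ : ℂ).re = 1) (hf₂ : (inner ℂ f₂ f₂ : ℂ).re = 1)
    (hf₁₂ : (inner ℂ f₁ f₂ : ℂ).re = 0)
    (hdimV : Module.finrank ℝ V = 2) (hdimW : Module.finrank ℝ W = 2) :
    |ω e₁ e₂| = |ω f₁ f₂| ↔
      ∃ U : EuclideanSpace ℂ (Fin 2) ≃ₗᵢ[ℂ] EuclideanSpace ℂ (Fin 2),
        V.map (U.toLinearEquiv.toLinearMap.restrictScalars ℝ) = W :=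
  symplecticity_iff_unitary_general ω hω V W e₁ e₂ f₁ f₂ hV hW he₁ he₂ he₁₂ hf₁ hf₂ hf₁₂
end
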